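/- Define g : ℕ → ℕ by g(0) = 1 and g(h) = g(h−1) + g(h−1)^2 for h ≥ 1. Then for every d ≥ 1, the Mockingbird lattice M(d) = {t : r_d ≼ t} is a finite set of cardinality g(d−1). -/

import Mathlib

/-- Mockingbird terms: the constant `M`, variables `x i`, and applications. -/
inductive MTerm : Type
  | M : MTerm
  | var : ℕ → MTerm
  | app : MTerm → MTerm → MTerm
  deriving DecidableEq

/-- The one-step rewrite relation `⇒` on Mockingbird terms. -/
inductive Step : MTerm → MTerm → Prop
  | mock (t : MTerm) : Step (MTerm.app MTerm.M t) (MTerm.app t t)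
  | left {t1 t1' : MTerm} (t2 : MTerm) :
      Step t1 t1' → Step (MTerm.app t1 t2) (MTerm.app t1' t2)
  | right (t1 : MTerm) {t2 t2' : MTerm} :
      Step t2 t2' → Step (MTerm.app t1 t2) (MTerm.app t1 t2')

/-- `≼`, the reflexive-transitive closure of `⇒`. -/
def MLe : MTerm → MTerm → Prop := Relation.ReflTransGen Step

/-- `≡`, the reflexive-symmetric-transitive closure of `⇒`. -/
def MEquiv : MTerm → MTerm → Prop := Relation.EqvGen Step

/-- Strict version of `≼`. -/
def MLt (s t : MTerm) : Prop := MLe s t ∧ s ≠ t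

/-- Covering relation for `≼`. -/
def MCovBy (s t : MTerm) : Prop := MLt s t ∧ ∀ z, MLt s z → ¬ MLt z t

/-- Duplicative trees: white or black nodes with a list (forest) of children. -/
inductive DTree : Type
  | W : List DTree → DTree
  | B : List DTree → DTree

/-- The one-step relation `⋖` on duplicative forests. -/
inductive DStep : List DTree → List DTree → Prop
  | dup (g : List DTree) : DStep [DTree.W g] [DTree.B (g ++ g)]
  | white {g g' : List DTree} : DStep g g' → DStep [DTree.W g] [DTree.W g']
  | black {g g' : List DTree} : DStep g g' → DStep [DTree.B g] [DTree.B g']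
  | head {t t' : DTree} (f : List DTree) : DStep [t] [t'] → DStep (t :: f) (t' :: f)
  | tail (t : DTree) {f f' : List DTree} : DStep f f' → DStep (t :: f) (t :: f')

/-- `≪`, the reflexive-transitive closure of `⋖`. -/
def DLe : List DTree → List DTree → Prop := Relation.ReflTransGen DStep

/-- The map `fr` from Mockingbird terms to duplicative forests. -/
def fr : MTerm → List DTree
  | MTerm.M => []
  | MTerm.var _ => []
  | MTerm.app MTerm.M MTerm.M => [DTree.B []]
  | MTerm.app MTerm.M t' => [DTree.W (fr t')]
  | MTerm.app t t' => [DTree.B (fr t ++ fr t')]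

mutual
  /-- The pruning map on duplicative trees (returns a forest). -/
  def prT : DTree → List DTree
    | DTree.W g => [DTree.W (prF g)]
    | DTree.B g => prF g
  /-- The pruning map on duplicative forests. -/
  def prF : List DTree → List DTree
    | [] => []
    | t :: f => prT t ++ prF f
end

mutual
  /-- The statistic `mtStat` on duplicative trees. -/
  def mtStat : DTree → ℕ
    | DTree.W g => 2 * ml g
    | DTree.B g => ml g
  /-- Sum of `mtStat` over the trees of a forest. -/
  def mtsum : List DTree → ℕ
    | [] => 0
    | t :: f => mtStat t + mtsum f
  /-- The statistic `ml` on duplicative forests: `1 - ℓ + Σ mtStat`. -/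
  def ml : List DTree → ℕ
    | f => mtsum f + 1 - f.length
end

mutual
  /-- Number of white nodes in a duplicative tree. -/
  def whitesT : DTree → ℕ
    | DTree.W g => 1 + whitesF g
    | DTree.B g => whitesF g
  /-- Number of white nodes in a duplicative forest. -/
  def whitesF : List DTree → ℕ
    | [] => 0
    | t :: f => whitesT t + whitesF f
end

/-- Closed terms: no variables. -/
def MClosed : MTerm → Prop
  | MTerm.M => True
  | MTerm.var _ => False
  | MTerm.app a b => MClosed a ∧ MClosed b

/-- Degree: number of applications. -/
def deg : MTerm → ℕ
  | MTerm.M => 0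
  | MTerm.var _ => 0
  | MTerm.app a b => deg a + deg b + 1

/-- Subterm relation. -/
inductive Subterm : MTerm → MTerm → Prop
  | refl (t : MTerm) : Subterm t t
  | left {s a : MTerm} (b : MTerm) : Subterm s a → Subterm s (MTerm.app a b)
  | right (a : MTerm) {s b : MTerm} : Subterm s b → Subterm s (MTerm.app a b)

/-- The term `r_d`. -/
def rTerm : ℕ → MTerm
  | 0 => MTerm.M
  | d + 1 => MTerm.app MTerm.M (rTerm d)

/-- Saturated chain from `a` to `b`, given as the list of its elements. -/
def SatChain (a b : MTerm) (c : List MTerm) : Prop :=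
  List.Chain' MCovBy c ∧ c.head? = some a ∧ c.getLast? = some b

/-- Explicit finite set of terms reachable from `rTerm d`. -/
def Rf : ℕ → Finset MTerm
  | 0 => {MTerm.M}
  | d + 1 => (Rf d).image (MTerm.app MTerm.M) ∪
      ((Rf d) ×ˢ (Rf d)).image (fun p => MTerm.app p.1 p.2)

lemma no_step_M {t : MTerm} : ¬ Step MTerm.M t := fun h => nomatch h

lemma mem_Rf_succ {d : ℕ} {t : MTerm} :
    t ∈ Rf (d+1) ↔ (∃ u ∈ Rf d, t = MTerm.app MTerm.M u) ∨
      (∃ a ∈ Rf d, ∃ b ∈ Rf d, t = MTerm.app a b) := by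
  simp only [Rf, Finset.mem_union, Finset.mem_image, Finset.mem_product, Prod.exists]
  constructor
  · rintro (⟨u, hu, rfl⟩ | ⟨a, b, ⟨ha, hb⟩, rfl⟩)
    · exact Or.inl ⟨u, hu, rfl⟩
    · exact Or.inr ⟨a, ha, b, hb, rfl⟩
  · rintro (⟨u, hu, rfl⟩ | ⟨a, ha, b, hb, rfl⟩)
    · exact Or.inl ⟨u, hu, rfl⟩
    · exact Or.inr ⟨a, b, ⟨ha, hb⟩, rfl⟩

lemma MLe_app_left {a a' b : MTerm} (h : MLe a a') :
    MLe (MTerm.app a b) (MTerm.app a' b) :=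
  Relation.ReflTransGen.lift (fun x => MTerm.app x b) (fun _ _ hs => Step.left b hs) _ _ h

lemma MLe_app_right {a b b' : MTerm} (h : MLe b b') :
    MLe (MTerm.app a b) (MTerm.app a b') :=
  Relation.ReflTransGen.lift (fun x => MTerm.app a x) (fun _ _ hs => Step.right a hs) _ _ h

lemma Rf_closed : ∀ d {t t' : MTerm}, t ∈ Rf d → Step t t' → t' ∈ Rf d := by
  intro d
  induction d with
  | zero =>
    intro t t' ht hs
    simp only [Rf, Finset.mem_singleton] at ht
    subst ht; exact absurd hs no_step_M
  | succ d ih =>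
    intro t t' ht hs
    rcases mem_Rf_succ.1 ht with ⟨u, hu, rfl⟩ | ⟨a, ha, b, hb, rfl⟩
    · cases hs with
      | mock => exact mem_Rf_succ.2 (Or.inr ⟨u, hu, u, hu, rfl⟩)
      | left _ h => exact absurd h no_step_M
      | right _ h => exact mem_Rf_succ.2 (Or.inl ⟨_, ih hu h, rfl⟩)
    · cases hs with
      | mock => exact mem_Rf_succ.2 (Or.inr ⟨b, hb, b, hb, rfl⟩)
      | left _ h => exact mem_Rf_succ.2 (Or.inr ⟨_, ih ha h, b, hb, rfl⟩)
      | right _ h => exact mem_Rf_succ.2 (Or.inr ⟨a, ha, _, ih hb h, rfl⟩)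

lemma rTerm_mem_Rf : ∀ d, rTerm d ∈ Rf d := by
  intro d
  induction d with
  | zero => simp [Rf, rTerm]
  | succ d ih => exact mem_Rf_succ.2 (Or.inl ⟨_, ih, rfl⟩)

lemma MLe_of_mem_Rf : ∀ d {t : MTerm}, t ∈ Rf d → MLe (rTerm d) t := by
  intro d
  induction d with
  | zero =>
    intro t ht
    simp only [Rf, Finset.mem_singleton] at ht
    subst ht; exact Relation.ReflTransGen.refl
  | succ d ih =>
    intro t ht
    rcases mem_Rf_succ.1 ht with ⟨u, hu, rfl⟩ | ⟨a, ha, b, hb, rfl⟩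
    · exact MLe_app_right (ih hu)
    · exact Relation.ReflTransGen.head (Step.mock _)
        ((MLe_app_left (ih ha)).trans (MLe_app_right (ih hb)))

lemma reach_eq_Rf (d : ℕ) : {t : MTerm | MLe (rTerm d) t} = ↑(Rf d) := by
  ext t
  simp only [Set.mem_setOf_eq, Finset.coe_sort_coe, Finset.mem_coe]
  constructor
  · intro h
    induction h with
    | refl => exact rTerm_mem_Rf d
    | tail _ hs ih => exact Rf_closed d ih hs
  · exact MLe_of_mem_Rf d

lemma Rf_isApp : ∀ d, 1 ≤ d → ∀ t ∈ Rf d, ∃ a b, t = MTerm.app a b := by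
  rintro (_ | d) hd t ht
  · omega
  · rcases mem_Rf_succ.1 ht with ⟨u, _, rfl⟩ | ⟨a, _, b, _, rfl⟩
    · exact ⟨_, _, rfl⟩
    · exact ⟨_, _, rfl⟩

lemma Rf_card_succ (d : ℕ) (hd : 1 ≤ d) :
    (Rf (d+1)).card = (Rf d).card + (Rf d).card ^ 2 := by
  have hdisj : Disjoint ((Rf d).image (MTerm.app MTerm.M))
      (((Rf d) ×ˢ (Rf d)).image (fun p => MTerm.app p.1 p.2)) := by
    rw [Finset.disjoint_left]
    rintro t ht1 ht2
    simp only [Finset.mem_image, Finset.mem_product, Prod.exists] at ht1 ht2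
    obtain ⟨u, hu, rfl⟩ := ht1
    obtain ⟨a, b, ⟨ha, _⟩, heq⟩ := ht2
    obtain ⟨p, q, rfl⟩ := Rf_isApp d hd a ha
    simp [MTerm.app.injEq] at heq
  show ((Rf d).image (MTerm.app MTerm.M) ∪ _).card = _
  rw [Finset.card_union_of_disjoint hdisj,
    Finset.card_image_of_injective _ (fun x y h => by injection h),
    Finset.card_image_of_injective _ (fun (x : MTerm × MTerm) y h => by
      cases x; cases y; simpa [Prod.ext_iff, MTerm.app.injEq] using h),
    Finset.card_product, sq]

lemma Rf_one_card : (Rf 1).card = 1 := by decide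

/-- for `d ≥ 1`, the Mockingbird lattice `M(d)` is finite with cardinality
`g (d-1)` where `g 0 = 1` and `g h = g (h-1) + g (h-1)^2`. -/
theorem mockingbird_lattice_cardinality (g : ℕ → ℕ) (hg0 : g 0 = 1)
    (hg : ∀ h, 1 ≤ h → g h = g (h - 1) + g (h - 1) ^ 2) :
    ∀ d, 1 ≤ d → {t : MTerm | MLe (rTerm d) t}.Finite ∧
      Set.ncard {t : MTerm | MLe (rTerm d) t} = g (d - 1) := by
  have hcard : ∀ d, 1 ≤ d → (Rf d).card = g (d - 1) := by
    intro d
    induction d with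
    | zero => omega
    | succ d ih =>
      intro _
      rcases Nat.eq_zero_or_pos d with rfl | hd
      · simpa [Rf_one_card] using hg0.symm
      · rw [Rf_card_succ d hd, ih hd, Nat.succ_sub_one, hg d hd]
  intro d hd
  rw [reach_eq_Rf d]
  exact ⟨(Rf d).finite_toSet, by rw [Set.ncard_coe_finset, hcard d hd]⟩
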